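/- (Stochastic Armijo condition.) Let f : ℝⁿ → ℝ be twice continuously differentiable with its Hessian uniformly bounded in operator norm by a constant L > 0 on ℝⁿ. Fix x ∈ ℝⁿ with ∇f(x) ≠ 0 and a deterministic symmetric positive definite n×n matrix B. Let v be an ℝⁿ-valued square-integrable random vector with E[v] = 0 and covariance E[v vᵀ] = R, where R is positive definite, and let e, e′ be integrable real random variables with E[e] = E[e′] = b. Define the noisy gradient g = ∇f(x) + v, the search direction p = −Bg, the noisy function values f̂(x) = f(x) + e and f̂(x + αp) = f(x + αp) + e′, and set γ = ∇f(x)ᵀ B ∇f(x) and β = Tr(BR). Then for every constant c with 0 < c < γ/(γ + β), there exists ᾱ > 0 such that for all α with 0 < α ≤ ᾱ, the Armijo condition holds in expectation: E[f̂(x + αp) − f̂(x) − c·α·gᵀp] ≤ 0. -/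

import Mathlib

/-!
Write `G = ∇f(x)` and `g = G + v`. The Hessian bound gives the Taylor estimate
`f (x + d) ≤ f x + G ⬝ᵥ d + L ‖d‖²`; taking `d = -α B g` and averaging over the noise,
`E[f̂(x + αp) - f̂(x) - cα gᵀp] ≤ -α (γ - c (γ + β)) + α² L E‖B g‖²`,
since `E[Gᵀ B g] = γ`, `E[gᵀ B g] = γ + β` and the two noise biases cancel.
The mean of the positive semidefinite form `gᵀ B g` is nonnegative, so `0 < c < γ / (γ + β)`
forces `γ - c (γ + β) > 0`, and the bound is nonpositive once `α` is small.
-/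

open Matrix MeasureTheory

section Taylor

variable {E F : Type*} [NormedAddCommGroup E] [NormedSpace ℝ E]
  [NormedAddCommGroup F] [NormedSpace ℝ F] {f : E → F} {L : ℝ}

theorem norm_fderiv_sub_le_of_norm_iteratedFDeriv_two_le (hf : ContDiff ℝ 2 f)
    (hL : ∀ z, ‖iteratedFDeriv ℝ 2 f z‖ ≤ L) (x y : E) :
    ‖fderiv ℝ f y - fderiv ℝ f x‖ ≤ L * ‖y - x‖ := by
  have hdiff : Differentiable ℝ (fderiv ℝ f) :=
    (hf.fderiv_right le_rfl).differentiable one_ne_zero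
  refine convex_univ.norm_image_sub_le_of_norm_fderiv_le (fun z _ => hdiff z) (fun z _ => ?_)
    trivial trivial
  rw [← norm_iteratedFDeriv_one, norm_iteratedFDeriv_fderiv]
  exact hL z

theorem norm_sub_sub_fderiv_le_of_norm_iteratedFDeriv_two_le (hf : ContDiff ℝ 2 f)
    (hL : ∀ z, ‖iteratedFDeriv ℝ 2 f z‖ ≤ L) (x d : E) :
    ‖f (x + d) - f x - fderiv ℝ f x d‖ ≤ L * ‖d‖ ^ 2 := by
  have key := (convex_closedBall x ‖d‖).norm_image_sub_le_of_norm_fderiv_le'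
    (fun z _ => (hf.differentiable two_ne_zero) z)
    (fun z hz => (norm_fderiv_sub_le_of_norm_iteratedFDeriv_two_le hf hL x z).trans
      (mul_le_mul_of_nonneg_left (mem_closedBall_iff_norm.1 hz) ((norm_nonneg _).trans (hL x))))
    (Metric.mem_closedBall_self (norm_nonneg d)) (y := x + d) (by simp)
  simpa [sq, mul_assoc] using key

end Taylor

theorem LinearMap.apply_eq_dotProduct_single {R ι : Type*} [CommSemiring R] [Fintype ι]
    [DecidableEq ι] (ℓ : (ι → R) →ₗ[R] R) (d : ι → R) :
    ℓ d = (fun i => ℓ (Pi.single i 1)) ⬝ᵥ d := by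
  conv_lhs => rw [← Finset.univ_sum_single d]
  refine (map_sum ℓ _ _).trans (Finset.sum_congr rfl fun i _ => ?_)
  rw [mul_comm, ← smul_eq_mul, ← map_smul, ← Pi.single_smul', smul_eq_mul, mul_one]

theorem Matrix.dotProduct_mulVec_eq_sum_sum {R ι : Type*} [CommSemiring R] [Fintype ι]
    (x y : ι → R) (M : Matrix ι ι R) : x ⬝ᵥ M *ᵥ y = ∑ i, ∑ j, M i j * (x i * y j) := by
  simp only [dotProduct, mulVec, Finset.mul_sum]
  exact Finset.sum_congr rfl fun i _ => Finset.sum_congr rfl fun j _ => by ring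

section OrderedField

variable {𝕜 : Type*} [Field 𝕜] [LinearOrder 𝕜] [IsStrictOrderedRing 𝕜]

theorem mul_lt_of_lt_div_of_nonneg {a c s : 𝕜} (hc : 0 < c) (h : c < a / s) (hs : 0 ≤ s) :
    c * s < a := by
  rcases hs.eq_or_lt with rfl | hs
  · simp only [div_zero] at h
    linarith
  · exact (lt_div_iff₀ hs).1 h

theorem exists_pos_forall_neg_mul_add_mul_sq_nonpos {δ : 𝕜} (hδ : 0 < δ) (K : 𝕜) :
    ∃ αbar > 0, ∀ α : 𝕜, 0 < α → α ≤ αbar → -α * δ + α ^ 2 * K ≤ 0 := by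
  refine ⟨δ / (|K| + 1), by positivity, fun α hα hαle => ?_⟩
  have h : α * (|K| + 1) ≤ δ := (le_div_iff₀ (by positivity)).1 hαle
  nlinarith [le_abs_self K, mul_le_mul_of_nonneg_left h hα.le]

end OrderedField

namespace MeasureTheory

variable {Ω ι : Type*} [MeasurableSpace Ω] {μ : Measure Ω} [Fintype ι] {X Y : Ω → ι → ℝ}

theorem MemLp.integrable_mul_eval (hX : MemLp X 2 μ) (hY : MemLp Y 2 μ) (i j : ι) :
    Integrable (fun ω => X ω i * Y ω j) μ :=
  (hX.eval i).integrable_mul (hY.eval j)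

theorem MemLp.integrable_dotProduct_mulVec (hX : MemLp X 2 μ) (hY : MemLp Y 2 μ)
    (M : Matrix ι ι ℝ) : Integrable (fun ω => X ω ⬝ᵥ M *ᵥ Y ω) μ := by
  simp_rw [dotProduct_mulVec_eq_sum_sum]
  exact integrable_finsetSum _ fun i _ => integrable_finsetSum _ fun j _ =>
    (hX.integrable_mul_eval hY i j).const_mul _

theorem MemLp.integral_dotProduct_mulVec (hX : MemLp X 2 μ) (hY : MemLp Y 2 μ)
    (M : Matrix ι ι ℝ) :
    ∫ ω, X ω ⬝ᵥ M *ᵥ Y ω ∂μ = ∑ i, ∑ j, M i j * ∫ ω, X ω i * Y ω j ∂μ := by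
  simp_rw [dotProduct_mulVec_eq_sum_sum]
  have hint : ∀ i j, Integrable (fun ω => M i j * (X ω i * Y ω j)) μ :=
    fun i j => (hX.integrable_mul_eval hY i j).const_mul (M i j)
  rw [integral_finsetSum _ fun i _ => integrable_finsetSum _ fun j _ => hint i j]
  refine Finset.sum_congr rfl fun i _ => ?_
  rw [integral_finsetSum _ fun j _ => hint i j]
  simp_rw [integral_const_mul]

theorem MemLp.integrable_sub_sub_dotProduct [IsFiniteMeasure μ] {f : (ι → ℝ) → ℝ}
    (hf : Continuous f) {x G : ι → ℝ} {L : ℝ}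
    (htaylor : ∀ d, |f (x + d) - f x - G ⬝ᵥ d| ≤ L * ‖d‖ ^ 2) {d : Ω → ι → ℝ}
    (hd : MemLp d 2 μ) : Integrable (fun ω => f (x + d ω) - f x - G ⬝ᵥ d ω) μ := by
  refine ((hd.integrable_norm_pow two_ne_zero).const_mul L).mono' ?_
    (.of_forall fun ω => htaylor (d ω))
  exact (show Continuous fun u => f (x + u) - f x - G ⬝ᵥ u by fun_prop).comp_aestronglyMeasurable
    hd.aestronglyMeasurable

theorem integral_armijo_gap_le [IsFiniteMeasure μ] {f : (ι → ℝ) → ℝ} (hf : Continuous f)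
    {x G : ι → ℝ} {L : ℝ} (htaylor : ∀ d, |f (x + d) - f x - G ⬝ᵥ d| ≤ L * ‖d‖ ^ 2)
    (B : Matrix ι ι ℝ) {g : Ω → ι → ℝ} (hg : MemLp g 2 μ)
    {e e' : Ω → ℝ} (he : Integrable e μ) (he' : Integrable e' μ) (α c : ℝ) :
    ∫ ω, (f (x + α • -(B *ᵥ g ω)) + e' ω) - (f x + e ω) - c * α * (g ω ⬝ᵥ -(B *ᵥ g ω)) ∂μ ≤
      -α * ∫ ω, G ⬝ᵥ B *ᵥ g ω ∂μ + α ^ 2 * (L * ∫ ω, ‖B *ᵥ g ω‖ ^ 2 ∂μ)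
        + (∫ ω, e' ω ∂μ - ∫ ω, e ω ∂μ) + c * α * ∫ ω, g ω ⬝ᵥ B *ᵥ g ω ∂μ := by
  set d : Ω → ι → ℝ := fun ω => α • -(B *ᵥ g ω)
  have hp : MemLp (fun ω => B *ᵥ g ω) 2 μ :=
    (LinearMap.toContinuousLinearMap B.mulVecLin).comp_memLp' hg
  have hd : MemLp d 2 μ := hp.neg.const_smul α
  have hnorm_d : ∀ ω, ‖d ω‖ ^ 2 = α ^ 2 * ‖B *ᵥ g ω‖ ^ 2 := fun ω => by
    rw [norm_smul, norm_neg, mul_pow, Real.norm_eq_abs, sq_abs]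
  set r : Ω → ℝ := fun ω => f (x + d ω) - f x - G ⬝ᵥ d ω
  have hr : Integrable r μ := hd.integrable_sub_sub_dotProduct hf htaylor
  have hS := MemLp.integrable_dotProduct_mulVec (memLp_const G) hg B
  have hQ := hg.integrable_dotProduct_mulVec hg B
  have hsplit : ∀ ω,
      (f (x + α • -(B *ᵥ g ω)) + e' ω) - (f x + e ω) - c * α * (g ω ⬝ᵥ -(B *ᵥ g ω))
        = r ω + (-α * (G ⬝ᵥ B *ᵥ g ω) + (e' ω - e ω) + c * α * (g ω ⬝ᵥ B *ᵥ g ω)) := fun ω => by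
    simp only [r, d, dotProduct_smul, dotProduct_neg, smul_eq_mul]
    ring
  have hr_le : ∫ ω, r ω ∂μ ≤ α ^ 2 * (L * ∫ ω, ‖B *ᵥ g ω‖ ^ 2 ∂μ) := by
    calc ∫ ω, r ω ∂μ ≤ ∫ ω, L * ‖d ω‖ ^ 2 ∂μ :=
          integral_mono hr ((hd.integrable_norm_pow two_ne_zero).const_mul L)
            fun ω => (le_abs_self _).trans (htaylor (d ω))
      _ = _ := by simp_rw [hnorm_d, integral_const_mul]; ring
  simp_rw [hsplit]
  rw [integral_add hr (by fun_prop), integral_add (by fun_prop) (by fun_prop),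
    integral_add (by fun_prop) (by fun_prop), integral_sub he' he, integral_const_mul,
    integral_const_mul]
  linarith

section Probability

variable [IsProbabilityMeasure μ]

theorem integral_const_add_of_integral_eq_zero {U : Ω → ℝ} (hU : Integrable U μ)
    (hU0 : ∫ ω, U ω ∂μ = 0) (a : ℝ) : ∫ ω, a + U ω ∂μ = a := by
  rw [integral_add (integrable_const a) hU, hU0]
  simp

theorem integral_const_add_mul_const_add {U W : Ω → ℝ} (hU : MemLp U 2 μ) (hW : MemLp W 2 μ)
    (hU0 : ∫ ω, U ω ∂μ = 0) (hW0 : ∫ ω, W ω ∂μ = 0) (a b : ℝ) :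
    ∫ ω, (a + U ω) * (b + W ω) ∂μ = a * b + ∫ ω, U ω * W ω ∂μ := by
  have hU1 := hU.integrable one_le_two
  have hW1 := hW.integrable one_le_two
  have hUW : Integrable (fun ω => U ω * W ω) μ := hU.integrable_mul hW
  have hexp : (fun ω => (a + U ω) * (b + W ω))
      = fun ω => a * b + (a * W ω + (b * U ω + U ω * W ω)) := by
    funext ω; ring
  rw [hexp, integral_add (by fun_prop) (by fun_prop), integral_add (by fun_prop) (by fun_prop),
    integral_add (by fun_prop) hUW]
  simp [integral_const_mul, hU0, hW0]

variable {V : Ω → ι → ℝ}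

theorem integral_dotProduct_mulVec_const_add (hV : MemLp V 2 μ)
    (hV0 : ∀ i, ∫ ω, V ω i ∂μ = 0) (a : ι → ℝ) (M : Matrix ι ι ℝ) :
    ∫ ω, a ⬝ᵥ M *ᵥ (a + V ω) ∂μ = a ⬝ᵥ M *ᵥ a := by
  have hg : MemLp (fun ω => a + V ω) 2 μ := (memLp_const a).add hV
  rw [MemLp.integral_dotProduct_mulVec (memLp_const a) hg, dotProduct_mulVec_eq_sum_sum]
  simp only [Pi.add_apply, integral_const_mul,
    integral_const_add_of_integral_eq_zero ((hV.eval _).integrable one_le_two) (hV0 _)]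

theorem integral_const_add_dotProduct_mulVec_const_add (hV : MemLp V 2 μ)
    (hV0 : ∀ i, ∫ ω, V ω i ∂μ = 0) {R : Matrix ι ι ℝ}
    (hR : ∀ i j, ∫ ω, V ω i * V ω j ∂μ = R i j) (a : ι → ℝ) (M : Matrix ι ι ℝ) :
    ∫ ω, (a + V ω) ⬝ᵥ M *ᵥ (a + V ω) ∂μ = a ⬝ᵥ M *ᵥ a + (M * R).trace := by
  have hg : MemLp (fun ω => a + V ω) 2 μ := (memLp_const a).add hV
  have hRt : Rᵀ = R := by
    ext i j
    simp only [transpose_apply, ← hR, mul_comm]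
  have hmom : ∀ i j, ∫ ω, (a i + V ω i) * (a j + V ω j) ∂μ = a i * a j + R i j := fun i j => by
    rw [integral_const_add_mul_const_add (hV.eval i) (hV.eval j) (hV0 i) (hV0 j), hR]
  rw [hg.integral_dotProduct_mulVec hg, ← hRt, ← sum_hadamard_eq, dotProduct_mulVec_eq_sum_sum,
    ← Finset.sum_add_distrib]
  simp_rw [Pi.add_apply, hmom]
  simp only [hadamard_apply, mul_add, Finset.sum_add_distrib]
end Probability

end MeasureTheory

theorem stochastic_armijo_condition_general {Ω : Type*} [MeasurableSpace Ω]
    (μ : Measure Ω) [IsProbabilityMeasure μ] (n : ℕ)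
    (f : (Fin n → ℝ) → ℝ) (hf : ContDiff ℝ 2 f)
    (L : ℝ) (hHess : ∀ z, ‖iteratedFDeriv ℝ 2 f z‖ ≤ L)
    (x : Fin n → ℝ)
    (grad : (Fin n → ℝ) → (Fin n → ℝ))
    (hgrad : ∀ y i, grad y i = fderiv ℝ f y (Pi.single i 1))
    (B R : Matrix (Fin n) (Fin n) ℝ) (hB : B.PosDef)
    (v : Ω → Fin n → ℝ) (hsq : ∀ i, MemLp (fun ω => v ω i) 2 μ)
    (hmean : ∀ i, ∫ ω, v ω i ∂μ = 0)
    (hcov : ∀ i j, ∫ ω, v ω i * v ω j ∂μ = R i j)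
    (e e' : Ω → ℝ) (he : Integrable e μ) (he' : Integrable e' μ)
    (b : ℝ) (hbe : ∫ ω, e ω ∂μ = b) (hbe' : ∫ ω, e' ω ∂μ = b)
    (γ β : ℝ) (hγ : γ = grad x ⬝ᵥ B.mulVec (grad x)) (hβ : β = (B * R).trace)
    (c : ℝ) (hc0 : 0 < c) (hc1 : c < γ / (γ + β)) :
    ∃ αbar > 0, ∀ α : ℝ, 0 < α → α ≤ αbar →
      ∫ ω, (f (x + α • (-(B.mulVec (grad x + v ω)))) + e' ω)
          - (f x + e ω)
          - c * α * ((grad x + v ω) ⬝ᵥ (-(B.mulVec (grad x + v ω)))) ∂μ ≤ 0 := by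
  set G := grad x
  have hv : MemLp v 2 μ := memLp_pi_iff.2 hsq
  have hg : MemLp (fun ω => G + v ω) 2 μ := (memLp_const G).add hv
  have hS : ∫ ω, G ⬝ᵥ B *ᵥ (G + v ω) ∂μ = γ := by
    rw [hγ]
    exact integral_dotProduct_mulVec_const_add hv hmean G B
  have hQ : ∫ ω, (G + v ω) ⬝ᵥ B *ᵥ (G + v ω) ∂μ = γ + β := by
    rw [hγ, hβ]
    exact integral_const_add_dotProduct_mulVec_const_add hv hmean hcov G B
  have hQ0 : 0 ≤ γ + β := hQ ▸ integral_nonneg fun ω => by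
    simpa using hB.posSemidef.dotProduct_mulVec_nonneg (G + v ω)
  have hδ : 0 < γ - c * (γ + β) := sub_pos.2 (mul_lt_of_lt_div_of_nonneg hc0 hc1 hQ0)
  have hfG : ∀ d, fderiv ℝ f x d = G ⬝ᵥ d := fun d => by
    rw [show G = fun i => fderiv ℝ f x (Pi.single i 1) from funext (hgrad x)]
    exact (fderiv ℝ f x).toLinearMap.apply_eq_dotProduct_single d
  have htaylor : ∀ d, |f (x + d) - f x - G ⬝ᵥ d| ≤ L * ‖d‖ ^ 2 := fun d => by
    simpa only [Real.norm_eq_abs, hfG] using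
      norm_sub_sub_fderiv_le_of_norm_iteratedFDeriv_two_le hf hHess x d
  obtain ⟨αbar, hαbar, hsmall⟩ := exists_pos_forall_neg_mul_add_mul_sq_nonpos hδ
    (L * ∫ ω, ‖B *ᵥ (G + v ω)‖ ^ 2 ∂μ)
  refine ⟨αbar, hαbar, fun α hα hαle => ?_⟩
  calc _ ≤ _ := integral_armijo_gap_le hf.continuous htaylor B hg he he' α c
    _ = -α * (γ - c * (γ + β)) + α ^ 2 * (L * ∫ ω, ‖B *ᵥ (G + v ω)‖ ^ 2 ∂μ) := by
        rw [hS, hQ, hbe, hbe']; ring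
    _ ≤ 0 := hsmall α hα hαle

/-- **Stochastic Armijo condition.** Let `f : ℝⁿ → ℝ` be twice continuously
differentiable with Hessian uniformly bounded in operator norm by `L > 0`.
Fix `x` with `∇f(x) ≠ 0` and a symmetric positive definite matrix `B`. Let `v`
be a square-integrable zero-mean random vector with positive definite
covariance `R`, and let `e, e'` be integrable real noises with common mean
`b`. With noisy gradient `g = ∇f(x) + v`, search direction `p = -B g`,
`γ = ∇f(x)ᵀ B ∇f(x)` and `β = Tr(B R)`, for every `0 < c < γ / (γ + β)` there
exists `ᾱ > 0` such that for all `0 < α ≤ ᾱ`,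
`E[f̂(x + α p) - f̂(x) - c α gᵀ p] ≤ 0`. -/
theorem stochastic_armijo_condition {Ω : Type*} [MeasurableSpace Ω]
    (μ : Measure Ω) [IsProbabilityMeasure μ] (n : ℕ)
    (f : (Fin n → ℝ) → ℝ) (hf : ContDiff ℝ 2 f)
    (L : ℝ) (hL : 0 < L) (hHess : ∀ z, ‖iteratedFDeriv ℝ 2 f z‖ ≤ L)
    (x : Fin n → ℝ)
    (grad : (Fin n → ℝ) → (Fin n → ℝ))
    (hgrad : ∀ y i, grad y i = fderiv ℝ f y (Pi.single i 1))
    (hgx : grad x ≠ 0)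
    (B R : Matrix (Fin n) (Fin n) ℝ) (hB : B.PosDef) (hR : R.PosDef)
    (v : Ω → Fin n → ℝ) (hsq : ∀ i, MemLp (fun ω => v ω i) 2 μ)
    (hmean : ∀ i, ∫ ω, v ω i ∂μ = 0)
    (hcov : ∀ i j, ∫ ω, v ω i * v ω j ∂μ = R i j)
    (e e' : Ω → ℝ) (he : Integrable e μ) (he' : Integrable e' μ)
    (b : ℝ) (hbe : ∫ ω, e ω ∂μ = b) (hbe' : ∫ ω, e' ω ∂μ = b)
    (γ β : ℝ) (hγ : γ = grad x ⬝ᵥ B.mulVec (grad x)) (hβ : β = (B * R).trace)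
    (c : ℝ) (hc0 : 0 < c) (hc1 : c < γ / (γ + β)) :
    ∃ αbar > 0, ∀ α : ℝ, 0 < α → α ≤ αbar →
      ∫ ω, (f (x + α • (-(B.mulVec (grad x + v ω)))) + e' ω)
          - (f x + e ω)
          - c * α * ((grad x + v ω) ⬝ᵥ (-(B.mulVec (grad x + v ω)))) ∂μ ≤ 0 :=
  stochastic_armijo_condition_general μ n f hf L hHess x grad hgrad B R hB v hsq hmean hcov e e' he
    he' b hbe hbe' γ β hγ hβ c hc0 hc1
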